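/- The subspace gap is the global gap for the Clifford-plus-phase ensemble: for all p ∈ [0,1] and c ∈ [−1,1], Δ(p,c) ≤ p/2. (Hence 1 − Δ(p,c) ≥ 1 − p/2, so the eigenvalue 1 − Δ(p,c) arising inside the Clifford-invariant subspace dominates all eigenvalues outside that subspace, which are at most 1 − p/2, and Δ(p,c) is the global spectral gap of the moment operator.) -/
import Mathlib

/-- The spectral gap `Δ(p,c)` of the Clifford-plus-phase ensemble on the Clifford-invariant
subspace (Eq. (eq:gap-4)). -/
noncomputable def cliffordPhaseGap (p c : ℝ) : ℝ :=
  1/4 - (c/4) * (1 - p) -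
    (1/8) * Real.sqrt (4*c^2*(p - 1)^2 - 2*c*(p - 4)*(p - 1) + 2*p*(p - 1) + 4)

/-- **The subspace gap is the global gap for the Clifford-plus-phase ensemble**: for all
`p ∈ [0,1]` and `c ∈ [−1,1]`, `Δ(p,c) ≤ p/2`; hence `1 − Δ(p,c) ≥ 1 − p/2` dominates all
eigenvalues outside the Clifford-invariant subspace, and `Δ(p,c)` is the global spectral
gap of the moment operator. -/
theorem cliffordPhaseGap_le_half_p (p c : ℝ)
    (hp : p ∈ Set.Icc (0:ℝ) 1) (hc : c ∈ Set.Icc (-1:ℝ) 1) :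
    cliffordPhaseGap p c ≤ p / 2 := by
  obtain ⟨hp0, hp1⟩ := hp
  obtain ⟨hc0, hc1⟩ := hc
  set D : ℝ := 4*c^2*(p - 1)^2 - 2*c*(p - 4)*(p - 1) + 2*p*(p - 1) + 4 with hDdef
  have hsq : (2 - 2*c*(1-p) - 4*p)^2 ≤ D := by
    have : D - (2 - 2*c*(1-p) - 4*p)^2 = 14*p*(1-p)*(1-c) := by ring
    nlinarith [mul_nonneg (mul_nonneg hp0 (by linarith : (0:ℝ) ≤ 1 - p)) (by linarith : (0:ℝ) ≤ 1 - c)]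
  have h1 : 2 - 2*c*(1-p) - 4*p ≤ Real.sqrt D := by
    calc 2 - 2*c*(1-p) - 4*p ≤ |2 - 2*c*(1-p) - 4*p| := le_abs_self _
    _ = Real.sqrt ((2 - 2*c*(1-p) - 4*p)^2) := (Real.sqrt_sq_eq_abs _).symm
    _ ≤ Real.sqrt D := Real.sqrt_le_sqrt hsq
  unfold cliffordPhaseGap
  rw [← hDdef]
  linarith
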